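/- Let b be a prime, let m ≥ 1, s ≥ 1 and t be integers with 0 ≤ t ≤ m, and let C_1, …, C_s be m×m matrices over 𝔽_b with ρ_m(C_1,…,C_s) ≥ m − t. Let 0 = w_1 ≤ w_2 ≤ ⋯ ≤ w_s be nonnegative integers with t < w_s < m, and let C̃_1, …, C̃_s be the corresponding row reduced matrices. Then for every choice of nonnegative integers d_1, …, d_s with d_1 + ⋯ + d_s = m − w_s, the collection of row vectors consisting of the first d_j rows of C̃_j for j = 1,…,s is linearly independent over 𝔽_b; consequently ρ_m(C̃_1,…,C̃_s) ≥ m − w_s. -/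

import Mathlib

open scoped BigOperators

/-- Linear independence of the system consisting of the first `d j` rows of each matrix `C j`. -/
def rowsLinIndep (b m : ℕ) {ι : Type*} (C : ι → Matrix (Fin m) (Fin m) (ZMod b))
    (d : ι → ℕ) : Prop :=
  LinearIndependent (ZMod b)
    (fun p : {p : ι × Fin m // (p.2 : ℕ) < d p.1} => C p.1.1 p.1.2)

/-- The linear independence parameter `ρ_m(C_1,…,C_s)`: the largest `d ∈ {0,…,m}` such that
for every choice of nonnegative integers `d_j` summing to `d`, the collection of the first `d_j`
rows of the matrices is linearly independent. -/
noncomputable def rho (b m : ℕ) {ι : Type*} [Fintype ι]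
    (C : ι → Matrix (Fin m) (Fin m) (ZMod b)) : ℕ :=
  sSup {d | d ≤ m ∧ ∀ dv : ι → ℕ, (∑ j, dv j) = d → rowsLinIndep b m C dv}

/-- Row reduced matrix: the last `min m w` rows are set to zero. -/
def rowReduced {b m : ℕ} (C : Matrix (Fin m) (Fin m) (ZMod b)) (w : ℕ) :
    Matrix (Fin m) (Fin m) (ZMod b) :=
  Matrix.of fun i r => if (i : ℕ) < m - min m w then C i r else 0

/-- Column-row reduced matrix: the last `min m w` rows and columns are set to zero. -/
def colRowReduced {b m : ℕ} (C : Matrix (Fin m) (Fin m) (ZMod b)) (w : ℕ) :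
    Matrix (Fin m) (Fin m) (ZMod b) :=
  Matrix.of fun i r => if (i : ℕ) < m - min m w ∧ (r : ℕ) < m - min m w then C i r else 0

/-- Reduced matrix with possibly different row/column reduction indices. -/
def colRowReduced' {b m : ℕ} (C : Matrix (Fin m) (Fin m) (ZMod b)) (wr wc : ℕ) :
    Matrix (Fin m) (Fin m) (ZMod b) :=
  Matrix.of fun i r => if (i : ℕ) < m - min m wr ∧ (r : ℕ) < m - min m wc then C i r else 0

/-- Upper-left `m × m` submatrix of an infinite matrix. -/
def upperLeft {b : ℕ} (C : Matrix ℕ ℕ (ZMod b)) (m : ℕ) : Matrix (Fin m) (Fin m) (ZMod b) :=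
  Matrix.of fun i r => C (i : ℕ) (r : ℕ)

/-- The `k`-th coordinate value produced by the digital method with generating matrix `C`. -/
noncomputable def digitalPoint (b m : ℕ) (C : Matrix (Fin m) (Fin m) (ZMod b)) (k : ℕ) : ℝ :=
  ∑ i : Fin m,
    ((C.mulVec fun r : Fin m => ((k / b ^ (r : ℕ)) % b : ZMod b)) i).val
      / (b : ℝ) ^ ((i : ℕ) + 1)

open Classical in
/-- The `b^m` points `P 0, …, P (b^m - 1)` form a `(t,m,|ι|)`-net in base `b` (counted with
multiplicity): every elementary interval of volume `b^(t-m)` contains exactly `b^t` points. -/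
def isNet (b m t : ℕ) {ι : Type*} [Fintype ι] (P : ℕ → ι → ℝ) : Prop :=
  ∀ d a : ι → ℕ, (∀ j, a j < b ^ d j) → (∑ j, d j) = m - t →
    ((Finset.range (b ^ m)).filter fun k =>
        ∀ j, (a j : ℝ) / (b : ℝ) ^ d j ≤ P k j ∧ P k j < ((a j : ℝ) + 1) / (b : ℝ) ^ d j).card
      = b ^ t

/-! Since `ρ_m(C) ≥ m - t ≥ m - w_s`, every choice of `d_j` summing to `m - w_s` is dominated by
one summing to `ρ_m(C)`, so the selected rows of the `C_j` are independent. They are among the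
first `m - w_s ≤ m - w_j` rows of `C_j`, which the row reduction leaves unchanged. -/

section RowsLinIndep

variable {b m : ℕ} {ι : Type*}

theorem rowsLinIndep.mono {C : ι → Matrix (Fin m) (Fin m) (ZMod b)} {d d' : ι → ℕ}
    (hli : rowsLinIndep b m C d') (h : d ≤ d') : rowsLinIndep b m C d :=
  LinearIndependent.comp hli
    (fun p : {p : ι × Fin m // (p.2 : ℕ) < d p.1} => ⟨p.1, p.2.trans_le (h p.1.1)⟩)
    fun _ _ hpq => Subtype.ext (congrArg Subtype.val hpq :)

theorem rowsLinIndep_zero (C : ι → Matrix (Fin m) (Fin m) (ZMod b)) :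
    rowsLinIndep b m C 0 :=
  haveI : IsEmpty {p : ι × Fin m // (p.2 : ℕ) < (0 : ι → ℕ) p.1} :=
    ⟨fun p => Nat.not_lt_zero _ p.2⟩
  linearIndependent_empty_type

theorem rowsLinIndep_of_isEmpty [IsEmpty ι] (C : ι → Matrix (Fin m) (Fin m) (ZMod b))
    (d : ι → ℕ) : rowsLinIndep b m C d :=
  haveI : IsEmpty {p : ι × Fin m // (p.2 : ℕ) < d p.1} := ⟨fun p => isEmptyElim p.1.1⟩
  linearIndependent_empty_type

theorem rowsLinIndep_congr {C C' : ι → Matrix (Fin m) (Fin m) (ZMod b)} {d : ι → ℕ}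
    (h : ∀ j (i : Fin m), (i : ℕ) < d j → C j i = C' j i) :
    rowsLinIndep b m C d ↔ rowsLinIndep b m C' d := by
  unfold rowsLinIndep
  rw [funext fun p : {p : ι × Fin m // (p.2 : ℕ) < d p.1} => h p.1.1 p.1.2 p.2]

end RowsLinIndep

section Rho

variable {b m : ℕ} {ι : Type*} [Fintype ι] {C : ι → Matrix (Fin m) (Fin m) (ZMod b)}

theorem rowsLinIndep_of_sum_eq_rho {d : ι → ℕ} (hd : ∑ j, d j = rho b m C) :
    rowsLinIndep b m C d := by
  have hzero : 0 ∈ {n | n ≤ m ∧ ∀ d : ι → ℕ, ∑ j, d j = n → rowsLinIndep b m C d} :=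
    ⟨Nat.zero_le m, fun d hd => by
      rw [show d = 0 from funext fun j => Finset.sum_eq_zero_iff.1 hd j (Finset.mem_univ j)]
      exact rowsLinIndep_zero C⟩
  exact (Nat.sSup_mem ⟨0, hzero⟩ ⟨m, fun _ hn => hn.1⟩).2 d hd

theorem rowsLinIndep_of_sum_le_rho {d : ι → ℕ} (hd : ∑ j, d j ≤ rho b m C) :
    rowsLinIndep b m C d := by
  classical
  cases isEmpty_or_nonempty ι
  · exact rowsLinIndep_of_isEmpty C d
  obtain ⟨j₀⟩ := ‹Nonempty ι›
  have hsum : ∑ j, (d + Pi.single j₀ (rho b m C - ∑ j, d j) : ι → ℕ) j = rho b m C := by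
    simp only [Pi.add_apply, Finset.sum_add_distrib, Finset.sum_pi_single', Finset.mem_univ,
      if_true]
    omega
  exact (rowsLinIndep_of_sum_eq_rho hsum).mono le_self_add

theorem le_rho {n : ℕ} (hn : n ≤ m) (h : ∀ d : ι → ℕ, ∑ j, d j = n → rowsLinIndep b m C d) :
    n ≤ rho b m C :=
  le_csSup ⟨m, fun _ hk => hk.1⟩ ⟨hn, h⟩

end Rho

theorem rowReduced_apply_of_lt {b m : ℕ} (C : Matrix (Fin m) (Fin m) (ZMod b)) {w : ℕ}
    {i : Fin m} (hi : (i : ℕ) < m - w) : rowReduced C w i = C i := by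
  funext r
  simp only [rowReduced, Matrix.of_apply, if_pos (show (i : ℕ) < m - min m w by omega)]

theorem rowsLinIndep_rowReduced_iff {b m : ℕ} {ι : Type*}
    (C : ι → Matrix (Fin m) (Fin m) (ZMod b)) {w d : ι → ℕ} (h : ∀ j, d j ≤ m - w j) :
    rowsLinIndep b m (fun j => rowReduced (C j) (w j)) d ↔ rowsLinIndep b m C d :=
  rowsLinIndep_congr fun j _ hi => rowReduced_apply_of_lt (C j) (hi.trans_le (h j))

/-- if `t < w_s < m`, then for every choice of `d_1,…,d_s ≥ 0` with
`d_1 + ⋯ + d_s = m − w_s`, the collection of the first `d_j` rows of the row reduced matrices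
is linearly independent; consequently `ρ_m(C̃_1,…,C̃_s) ≥ m − w_s`. -/
theorem rowsLinIndep_rowReduced_of_lt (b m s t : ℕ)
    (hs : 1 ≤ s) (C : Fin s → Matrix (Fin m) (Fin m) (ZMod b))
    (hrho : m - t ≤ rho b m C)
    (w : Fin s → ℕ) (hwmono : Monotone w)
    (hws_gt : t < w ⟨s - 1, by omega⟩) :
    (∀ dv : Fin s → ℕ, (∑ j, dv j) = m - w ⟨s - 1, by omega⟩ →
        rowsLinIndep b m (fun j => rowReduced (C j) (w j)) dv) ∧
      m - w ⟨s - 1, by omega⟩ ≤ rho b m (fun j => rowReduced (C j) (w j)) := by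
  have hw_le : ∀ j : Fin s, w j ≤ w ⟨s - 1, by omega⟩ :=
    fun j => hwmono (Fin.le_def.2 (Nat.le_sub_one_of_lt j.isLt))
  have hindep : ∀ dv : Fin s → ℕ, (∑ j, dv j) = m - w ⟨s - 1, by omega⟩ →
      rowsLinIndep b m (fun j => rowReduced (C j) (w j)) dv := by
    intro dv hdv
    have hdv_le : ∀ j, dv j ≤ m - w j := fun j =>
      (Finset.single_le_sum (fun i _ => Nat.zero_le (dv i)) (Finset.mem_univ j)).trans
        (hdv.trans_le (Nat.sub_le_sub_left (hw_le j) m))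
    exact (rowsLinIndep_rowReduced_iff C hdv_le).2 (rowsLinIndep_of_sum_le_rho (by omega))
  exact ⟨hindep, le_rho (Nat.sub_le m _) hindep⟩
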